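/- Let G be a group generated by elements a₁, b₁, ..., a_{2k}, b_{2k}, c, d (for k ≥ 1) subject to (at least) the relations: [b_i⁻¹, d⁻¹] = a_i and [a_i⁻¹, d] = b_i for all 1 ≤ i ≤ 2k; [d⁻¹, b_{2k}⁻¹] = c; [c⁻¹, b_{2k}] = d; [a_{2k}, c] = 1; [a_{2k}, d] = 1; a_i·a_{2k+1-i} = 1 for 1 ≤ i ≤ k; b₁b₂⋯b_{2k} = 1; and b₂b₃⋯b_{2k-1} = [a_{2k}, b_{2k}]. Then G is the trivial group. -/

import Mathlib

open scoped commutatorElement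

/-- π₁(X(n,k)) is trivial: a group generated by a₁,b₁,…,a_{2k},b_{2k},c,d
subject to the listed relations is the trivial group.
Here ⁅x,y⁆ = x*y*x⁻¹*y⁻¹. -/
theorem stmt4 (G : Type*) [Group G] (k : ℕ) (hk : 1 ≤ k)
    (a b : ℕ → G) (c d : G)
    (hgen : Subgroup.closure
      ({x | ∃ i, 1 ≤ i ∧ i ≤ 2 * k ∧ (x = a i ∨ x = b i)} ∪ {c, d}) = ⊤)
    (hab1 : ∀ i, 1 ≤ i → i ≤ 2 * k → ⁅(b i)⁻¹, d⁻¹⁆ = a i)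
    (hab2 : ∀ i, 1 ≤ i → i ≤ 2 * k → ⁅(a i)⁻¹, d⁆ = b i)
    (hc : ⁅d⁻¹, (b (2 * k))⁻¹⁆ = c)
    (hd : ⁅c⁻¹, b (2 * k)⁆ = d)
    (hac : ⁅a (2 * k), c⁆ = 1)
    (had : ⁅a (2 * k), d⁆ = 1)
    (haa : ∀ i, 1 ≤ i → i ≤ k → a i * a (2 * k + 1 - i) = 1)
    (hb : ((List.range (2 * k)).map (fun i => b (i + 1))).prod = 1)
    (hb2 : ((List.range (2 * k - 2)).map (fun i => b (i + 2))).prod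
        = ⁅a (2 * k), b (2 * k)⁆) :
    ∀ x : G, x = 1 := by
  -- a_{2k} commutes with d
  have hcomm : a (2 * k) * d = d * a (2 * k) := by
    have := had
    rw [commutatorElement_def] at this
    group at this ⊢
    rw [← mul_inv_eq_one]
    group
    exact this
  -- hence b_{2k} = 1
  have hb2k : b (2 * k) = 1 := by
    have h := hab2 (2 * k) (by omega) le_rfl
    rw [commutatorElement_def] at h
    rw [← h, ← mul_inv_eq_one]
    have : (a (2 * k))⁻¹ * d = d * (a (2 * k))⁻¹ := by
      rw [inv_mul_eq_iff_eq_mul, ← mul_assoc, hcomm, mul_assoc, mul_inv_cancel, mul_one]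
    rw [this]
    group
  have hc1 : c = 1 := by rw [← hc, hb2k]; simp
  have hd1 : d = 1 := by rw [← hd, hc1, hb2k]; simp
  have hbi : ∀ i, 1 ≤ i → i ≤ 2 * k → b i = 1 := by
    intro i h1 h2
    rw [← hab2 i h1 h2, hd1]
    simp
  have hai : ∀ i, 1 ≤ i → i ≤ 2 * k → a i = 1 := by
    intro i h1 h2
    rw [← hab1 i h1 h2, hd1]
    simp
  intro x
  have hx : x ∈ Subgroup.closure
      ({x | ∃ i, 1 ≤ i ∧ i ≤ 2 * k ∧ (x = a i ∨ x = b i)} ∪ {c, d} : Set G) := by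
    rw [hgen]; trivial
  have hle : Subgroup.closure
      ({x | ∃ i, 1 ≤ i ∧ i ≤ 2 * k ∧ (x = a i ∨ x = b i)} ∪ {c, d} : Set G)
      ≤ (⊥ : Subgroup G) := by
    rw [Subgroup.closure_le]
    rintro y (⟨i, h1, h2, (rfl | rfl)⟩ | (rfl | rfl))
    · simpa [Subgroup.mem_bot] using hai i h1 h2
    · simpa [Subgroup.mem_bot] using hbi i h1 h2
    · simpa [Subgroup.mem_bot] using hc1
    · simpa [Subgroup.mem_bot] using hd1
  simpa [Subgroup.mem_bot] using hle hx
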